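/- Let $y \in C^1([t_0,\infty))$ with $y(t) \ge 0$, suppose $A = \int_{t_0}^{\infty} y(s)\,ds < \infty$, and suppose $y'(t) \le a(t) y(t)$ for all $t \ge t_0$ where $a(t) \ge 0$ and $B = \int_{t_0}^{\infty} a(s)\,ds < \infty$. Then for all $t \ge t_0$ one has $y(t) \le \big((t_0 y(t_0) + 1)\exp(A+B) - 1\big)/t$. -/
import Mathlib


open MeasureTheory Set

/-- Gronwall-type decay lemma (Lemma 3.1, after Deckelnick). -/
theorem stmt0 (t₀ : ℝ) (ht₀ : 0 < t₀) (y y' a : ℝ → ℝ)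
    (hy0 : ∀ t ∈ Ici t₀, 0 ≤ y t)
    (hderiv : ∀ t ∈ Ici t₀, HasDerivAt y (y' t) t)
    (hy'cont : ContinuousOn y' (Ici t₀))
    (hA : IntegrableOn y (Ici t₀))
    (ha0 : ∀ t ∈ Ici t₀, 0 ≤ a t)
    (hB : IntegrableOn a (Ici t₀))
    (hineq : ∀ t ∈ Ici t₀, y' t ≤ a t * y t) :
    ∀ t ∈ Ici t₀,
      y t ≤ ((t₀ * y t₀ + 1) *
        Real.exp ((∫ s in Ici t₀, y s) + (∫ s in Ici t₀, a s)) - 1) / t := by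
  intro t ht
  rw [mem_Ici] at ht
  have htpos : 0 < t := lt_of_lt_of_le ht₀ ht
  have hden : ∀ s ∈ Ici t₀, 0 < s * y s + 1 := by
    intro s hs
    have h1 : 0 ≤ s * y s :=
      mul_nonneg (le_of_lt (lt_of_lt_of_le ht₀ hs)) (hy0 s hs)
    linarith
  have hycont : ContinuousOn y (Ici t₀) := fun s hs =>
    ((hderiv s hs).continuousAt).continuousWithinAt
  -- derivative of log (s * y s + 1)
  have hL : ∀ s ∈ Icc t₀ t, HasDerivAt (fun u => Real.log (u * y u + 1))
      ((1 * y s + s * y' s) / (s * y s + 1)) s := by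
    intro s hs
    have h1 : HasDerivAt (fun u => u * y u + 1) (1 * y s + s * y' s) s :=
      ((hasDerivAt_id s).mul (hderiv s hs.1)).add_const 1
    exact h1.log (ne_of_gt (hden s hs.1))
  have hint_g : IntervalIntegrable
      (fun s => (1 * y s + s * y' s) / (s * y s + 1)) volume t₀ t := by
    apply ContinuousOn.intervalIntegrable
    rw [uIcc_of_le ht]
    apply ContinuousOn.div
    · exact (continuousOn_const.mul (hycont.mono Icc_subset_Ici_self)).add
        (continuousOn_id.mul (hy'cont.mono Icc_subset_Ici_self))
    · exact (continuousOn_id.mul (hycont.mono Icc_subset_Ici_self)).add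
        continuousOn_const
    · exact fun s hs => ne_of_gt (hden s hs.1)
  have hftc := intervalIntegral.integral_eq_sub_of_hasDerivAt
    (f := fun u => Real.log (u * y u + 1)) (by rw [uIcc_of_le ht]; exact hL) hint_g
  have hy_int : IntervalIntegrable y volume t₀ t := by
    apply IntegrableOn.intervalIntegrable
    rw [uIcc_of_le ht]; exact hA.mono_set Icc_subset_Ici_self
  have ha_int : IntervalIntegrable a volume t₀ t := by
    apply IntegrableOn.intervalIntegrable
    rw [uIcc_of_le ht]; exact hB.mono_set Icc_subset_Ici_self
  have hya_int : IntervalIntegrable (fun s => y s + a s) volume t₀ t :=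
    hy_int.add ha_int
  have hmono : (∫ s in t₀..t, (1 * y s + s * y' s) / (s * y s + 1))
      ≤ ∫ s in t₀..t, (y s + a s) := by
    apply intervalIntegral.integral_mono_on ht hint_g hya_int
    intro s hs
    have hs' : s ∈ Ici t₀ := hs.1
    have hd := hden s hs'
    rw [div_le_iff₀ hd]
    have hy := hy0 s hs'
    have ha := ha0 s hs'
    have hi := hineq s hs'
    have hsp : (0:ℝ) ≤ s := le_trans ht₀.le hs.1
    nlinarith [mul_le_mul_of_nonneg_left hi hsp, mul_nonneg hy hy,
      mul_nonneg (mul_nonneg ha hsp) hy, mul_nonneg hsp (mul_nonneg hy hy)]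
  have hyA : (∫ s in t₀..t, y s) ≤ ∫ s in Ici t₀, y s := by
    rw [intervalIntegral.integral_of_le ht]
    apply setIntegral_mono_set hA
    · exact (ae_restrict_iff' measurableSet_Ici).2 (ae_of_all _ hy0)
    · exact HasSubset.Subset.eventuallyLE (fun x hx => hx.1.le)
  have haB : (∫ s in t₀..t, a s) ≤ ∫ s in Ici t₀, a s := by
    rw [intervalIntegral.integral_of_le ht]
    apply setIntegral_mono_set hB
    · exact (ae_restrict_iff' measurableSet_Ici).2 (ae_of_all _ ha0)
    · exact HasSubset.Subset.eventuallyLE (fun x hx => hx.1.le)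
  have hsplit : (∫ s in t₀..t, (y s + a s))
      = (∫ s in t₀..t, y s) + ∫ s in t₀..t, a s :=
    intervalIntegral.integral_add hy_int ha_int
  have hlog : Real.log (t * y t + 1) ≤ Real.log (t₀ * y t₀ + 1)
      + ((∫ s in Ici t₀, y s) + ∫ s in Ici t₀, a s) := by
    have := hftc
    linarith [hmono, hyA, haB, hsplit.le, hsplit.ge, this.le, this.ge]
  have hw : t * y t + 1 ≤ (t₀ * y t₀ + 1) *
      Real.exp ((∫ s in Ici t₀, y s) + ∫ s in Ici t₀, a s) := by
    have h1 := Real.exp_le_exp.2 hlog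
    rwa [Real.exp_log (hden t (by simpa using ht)), Real.exp_add,
      Real.exp_log (hden t₀ self_mem_Ici)] at h1
  rw [le_div_iff₀ htpos, mul_comm]
  linarith
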